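/- Let (x_n) be a sequence in ℝ/ℤ and suppose there exists a bounded sequence of positive reals (t_N), with t_N ≤ C for all N, such that lim_{N→∞} (1/N²) Σ_{m,n=1}^N θ_{t_N}(x_n - x_m) = 1. Then (x_n) is uniformly distributed mod 1. -/

import Mathlib

open Real Filter Finset

noncomputable def jacobiTheta' (t x : ℝ) : ℝ :=
  1 + 2 * ∑' k : ℕ, Real.exp (-4 * π ^ 2 * ((k : ℝ) + 1) ^ 2 * t) *
    Real.cos (2 * π * ((k : ℝ) + 1) * x)

/-- Uniform distribution mod 1 in the sense of Weyl's criterion. -/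
def WeylUD (x : ℕ → ℝ) : Prop :=
  ∀ ℓ : ℤ, ℓ ≠ 0 →
    Filter.Tendsto (fun N : ℕ => (1 / (N : ℂ)) * ∑ n ∈ Finset.range N,
      Complex.exp (2 * (Real.pi : ℂ) * Complex.I * (ℓ : ℂ) * (x n : ℂ))) Filter.atTop (nhds 0)

lemma summable_A {t : ℝ} (ht : 0 < t) :
    Summable (fun k : ℕ => Real.exp (-4 * π ^ 2 * ((k : ℝ) + 1) ^ 2 * t)) := by
  have hp : (0:ℝ) < π ^ 2 := by positivity
  have hr1 : Real.exp (-(4 * π ^ 2 * t)) < 1 := by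
    rw [Real.exp_lt_one_iff]
    nlinarith [mul_pos hp ht]
  apply Summable.of_nonneg_of_le (fun k => (Real.exp_pos _).le) (fun k => ?_)
    (summable_geometric_of_lt_one (Real.exp_pos _).le hr1)
  have hk : (0:ℝ) ≤ (k:ℝ) := Nat.cast_nonneg k
  calc Real.exp (-4 * π ^ 2 * ((k : ℝ) + 1) ^ 2 * t)
      ≤ Real.exp (((k:ℕ)+1 : ℕ) * (-(4 * π ^ 2 * t))) := by
        apply Real.exp_le_exp.mpr
        push_cast
        nlinarith [mul_pos hp ht, mul_nonneg (mul_nonneg (mul_pos hp ht).le hk) hk]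
    _ = Real.exp (-(4 * π ^ 2 * t)) ^ (k+1) := by rw [Real.exp_nat_mul]
    _ ≤ Real.exp (-(4 * π ^ 2 * t)) ^ k :=
        pow_le_pow_of_le_one (Real.exp_pos _).le hr1.le (Nat.le_succ k)

lemma sum_cos_eq_normSq (c : ℝ) (x : ℕ → ℝ) (N : ℕ) :
    ∑ m ∈ range N, ∑ n ∈ range N, Real.cos (c * (x n - x m)) =
      Complex.normSq (∑ n ∈ range N, Complex.exp ((c * x n : ℝ) * Complex.I)) := by
  set E : ℕ → ℂ := fun n => Complex.exp ((c * x n : ℝ) * Complex.I) with hE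
  have key : ∀ m n : ℕ, Real.cos (c * (x n - x m)) = (E n * (starRingEnd ℂ) (E m)).re := by
    intro m n
    rw [hE]
    simp only
    rw [← Complex.exp_conj, ← Complex.exp_add]
    have harg : ((c * x n : ℝ) : ℂ) * Complex.I + (starRingEnd ℂ) (((c * x m : ℝ) : ℂ) * Complex.I)
        = ((c * (x n - x m) : ℝ) : ℂ) * Complex.I := by
      rw [map_mul, Complex.conj_ofReal, Complex.conj_I]
      push_cast
      ring
    rw [harg, Complex.exp_ofReal_mul_I_re]
  calc ∑ m ∈ range N, ∑ n ∈ range N, Real.cos (c * (x n - x m))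
      = (∑ m ∈ range N, ∑ n ∈ range N, E n * (starRingEnd ℂ) (E m)).re := by
        rw [Complex.re_sum]
        refine Finset.sum_congr rfl fun m _ => ?_
        rw [Complex.re_sum]
        exact Finset.sum_congr rfl fun n _ => key m n
    _ = ((∑ n ∈ range N, E n) * (starRingEnd ℂ) (∑ n ∈ range N, E n)).re := by
        rw [map_sum, Finset.sum_mul_sum, Finset.sum_comm]
    _ = Complex.normSq (∑ n ∈ range N, E n) := by
        rw [Complex.mul_conj, Complex.ofReal_re]

lemma summable_mul_bdd {t : ℝ} (ht : 0 < t) (c : ℕ → ℝ) (B : ℝ) (hc : ∀ k, |c k| ≤ B) :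
    Summable (fun k : ℕ => Real.exp (-4 * π ^ 2 * ((k : ℝ) + 1) ^ 2 * t) * c k) := by
  apply Summable.of_norm
  apply Summable.of_nonneg_of_le (fun k => norm_nonneg _) (fun k => ?_)
    ((summable_A ht).mul_right B)
  rw [Real.norm_eq_abs, abs_mul, abs_of_nonneg (Real.exp_pos _).le]
  exact mul_le_mul_of_nonneg_left (hc k) (Real.exp_pos _).le

lemma theta_double_sum {t : ℝ} (ht : 0 < t) (x : ℕ → ℝ) (N : ℕ) :
    ∑ m ∈ range N, ∑ n ∈ range N, jacobiTheta' t (x n - x m) =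
      (N : ℝ) ^ 2 + 2 * ∑' k : ℕ, Real.exp (-4 * π ^ 2 * ((k : ℝ) + 1) ^ 2 * t) *
        Complex.normSq (∑ n ∈ range N, Complex.exp
          ((2 * π * ((k : ℝ) + 1) * x n : ℝ) * Complex.I)) := by
  have hsum : ∀ y : ℝ, Summable (fun k : ℕ =>
      Real.exp (-4 * π ^ 2 * ((k : ℝ) + 1) ^ 2 * t) * Real.cos (2 * π * ((k : ℝ) + 1) * y)) :=
    fun y => summable_mul_bdd ht _ 1 (fun k => Real.abs_cos_le_one _)
  have step1 : ∑ m ∈ range N, ∑ n ∈ range N, jacobiTheta' t (x n - x m)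
      = (N : ℝ) ^ 2 + 2 * ∑ m ∈ range N, ∑ n ∈ range N,
          ∑' k : ℕ, Real.exp (-4 * π ^ 2 * ((k : ℝ) + 1) ^ 2 * t) *
            Real.cos (2 * π * ((k : ℝ) + 1) * (x n - x m)) := by
    unfold jacobiTheta'
    simp [Finset.sum_add_distrib, Finset.mul_sum, Finset.sum_mul]
    ring
  rw [step1]
  have step2 : ∑ m ∈ range N, ∑ n ∈ range N,
      ∑' k : ℕ, Real.exp (-4 * π ^ 2 * ((k : ℝ) + 1) ^ 2 * t) *
        Real.cos (2 * π * ((k : ℝ) + 1) * (x n - x m))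
      = ∑' k : ℕ, ∑ m ∈ range N, ∑ n ∈ range N,
          Real.exp (-4 * π ^ 2 * ((k : ℝ) + 1) ^ 2 * t) *
            Real.cos (2 * π * ((k : ℝ) + 1) * (x n - x m)) := by
    rw [Summable.tsum_finsetSum (fun m _ => summable_sum fun n _ => hsum _)]
    exact Finset.sum_congr rfl fun m _ => (Summable.tsum_finsetSum (fun n _ => hsum _)).symm
  rw [step2]
  congr 1
  refine congrArg _ (tsum_congr fun k => ?_)
  rw [← sum_cos_eq_normSq (2 * π * ((k : ℝ) + 1)) x N]
  simp_rw [Finset.mul_sum]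

lemma key_tendsto (x : ℕ → ℝ) (t : ℕ → ℝ) (htpos : ∀ N, 0 < t N)
    (C : ℝ) (htC : ∀ N, t N ≤ C)
    (hlim : Tendsto (fun N : ℕ => (1 / (N : ℝ) ^ 2) *
      ∑ m ∈ Finset.range N, ∑ n ∈ Finset.range N, jacobiTheta' (t N) (x n - x m))
      atTop (nhds 1)) (k : ℕ) :
    Tendsto (fun N : ℕ => ‖∑ n ∈ range N, Complex.exp
        ((2 * π * ((k : ℝ) + 1) * x n : ℝ) * Complex.I)‖ / (N : ℝ))
      atTop (nhds 0) := by
  set S : ℕ → ℕ → ℂ := fun j N => ∑ n ∈ range N, Complex.exp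
      ((2 * π * ((j : ℝ) + 1) * x n : ℝ) * Complex.I) with hS
  set a : ℕ → ℕ → ℝ := fun j N =>
      Real.exp (-4 * π ^ 2 * ((j : ℝ) + 1) ^ 2 * t N) * Complex.normSq (S j N) / (N : ℝ) ^ 2
      with ha
  have hSbd : ∀ j N : ℕ, Complex.normSq (S j N) ≤ (N:ℝ)^2 := by
    intro j N
    have h1 : ‖S j N‖ ≤ (N:ℝ) := by
      calc ‖S j N‖ ≤ ∑ n ∈ range N,
            ‖Complex.exp ((2 * π * ((j : ℝ) + 1) * x n : ℝ) * Complex.I)‖ := norm_sum_le _ _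
        _ = ∑ _n ∈ range N, (1:ℝ) := by
            refine Finset.sum_congr rfl fun n _ => ?_
            rw [Complex.norm_exp_ofReal_mul_I]
        _ = (N:ℝ) := by simp
    calc Complex.normSq (S j N) = ‖S j N‖^2 := (Complex.sq_norm _).symm
      _ ≤ (N:ℝ)^2 := pow_le_pow_left₀ (norm_nonneg _) h1 2
  have hanonneg : ∀ j N : ℕ, 0 ≤ a j N := by
    intro j N
    simp only [ha]
    have := Complex.normSq_nonneg (S j N)
    positivity
  have hsummable : ∀ N : ℕ, Summable (fun j => a j N) := by
    intro N
    simp only [ha, mul_div_assoc]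
    refine summable_mul_bdd (htpos N) _ 1 (fun j => ?_)
    rw [abs_of_nonneg (div_nonneg (Complex.normSq_nonneg _) (by positivity))]
    exact div_le_one_of_le₀ (hSbd j N) (by positivity)
  have hG : Tendsto (fun N => ∑' j, a j N) atTop (nhds 0) := by
    have h1 : Tendsto (fun N : ℕ => ((1 / (N : ℝ) ^ 2) *
        ∑ m ∈ range N, ∑ n ∈ range N, jacobiTheta' (t N) (x n - x m) - 1) / 2)
        atTop (nhds 0) := by
      have := (hlim.sub_const 1).div_const 2
      simpa using this
    refine h1.congr' ?_
    filter_upwards [eventually_ge_atTop 1] with N hN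
    have hNpos : (0:ℝ) < (N:ℝ) := by exact_mod_cast hN
    have hN0 : ((N:ℝ)^2) ≠ 0 := by positivity
    rw [theta_double_sum (htpos N) x N]
    have hT : ∑' j, a j N = (∑' j : ℕ, Real.exp (-4 * π ^ 2 * ((j : ℝ) + 1) ^ 2 * t N) *
        Complex.normSq (S j N)) / (N:ℝ)^2 := by
      simp only [ha, tsum_div_const]
    rw [hT, hS]
    field_simp
    ring_nf
    congr 1
    refine tsum_congr fun j => ?_
    ring_nf
  have hak : Tendsto (fun N => a k N) atTop (nhds 0) := by
    refine squeeze_zero (fun N => hanonneg k N)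
      (fun N => Summable.le_tsum (hsummable N) k fun i _ => hanonneg i N) hG
  have hnsq : Tendsto (fun N => Complex.normSq (S k N) / (N:ℝ)^2) atTop (nhds 0) := by
    have hEk : ∀ N : ℕ, Complex.normSq (S k N) / (N:ℝ)^2
        = a k N * Real.exp (4 * π ^ 2 * ((k : ℝ) + 1) ^ 2 * t N) := by
      intro N
      have h1 : Real.exp (-4 * π ^ 2 * ((k:ℝ)+1) ^ 2 * t N) *
          Real.exp (4 * π ^ 2 * ((k:ℝ)+1) ^ 2 * t N) = 1 := by
        rw [← Real.exp_add]
        norm_num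
      calc Complex.normSq (S k N) / (N:ℝ)^2
          = (Real.exp (-4 * π ^ 2 * ((k:ℝ)+1) ^ 2 * t N) *
              Real.exp (4 * π ^ 2 * ((k:ℝ)+1) ^ 2 * t N)) *
              (Complex.normSq (S k N) / (N:ℝ)^2) := by rw [h1, one_mul]
        _ = a k N * Real.exp (4 * π ^ 2 * ((k : ℝ) + 1) ^ 2 * t N) := by simp only [ha]; ring
    have hub : ∀ N : ℕ, Complex.normSq (S k N) / (N:ℝ)^2
        ≤ a k N * Real.exp (4 * π ^ 2 * ((k : ℝ) + 1) ^ 2 * C) := by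
      intro N
      rw [hEk N]
      refine mul_le_mul_of_nonneg_left (Real.exp_le_exp.mpr ?_) (hanonneg k N)
      have hc : (0:ℝ) ≤ 4 * π ^ 2 * ((k : ℝ) + 1) ^ 2 := by positivity
      exact mul_le_mul_of_nonneg_left (htC N) hc
    refine squeeze_zero (fun N => div_nonneg (Complex.normSq_nonneg _) (by positivity)) hub ?_
    simpa using hak.mul_const (Real.exp (4 * π ^ 2 * ((k : ℝ) + 1) ^ 2 * C))
  have h2 : ∀ N : ℕ, (‖S k N‖ / (N:ℝ))^2 = Complex.normSq (S k N) / (N:ℝ)^2 := by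
    intro N
    rw [div_pow, Complex.sq_norm]
  have h3 : Tendsto (fun N => (‖S k N‖ / (N:ℝ))^2) atTop (nhds 0) :=
    hnsq.congr (fun N => (h2 N).symm)
  have h4 := (Real.continuous_sqrt.tendsto 0).comp h3
  rw [Real.sqrt_zero] at h4
  refine h4.congr fun N => ?_
  simp only [Function.comp]
  exact Real.sqrt_sq (by positivity)

theorem stmt_14 (x : ℕ → ℝ) (t : ℕ → ℝ) (htpos : ∀ N, 0 < t N)
    (C : ℝ) (htC : ∀ N, t N ≤ C)
    (hlim : Tendsto (fun N : ℕ => (1 / (N : ℝ) ^ 2) *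
      ∑ m ∈ Finset.range N, ∑ n ∈ Finset.range N, jacobiTheta' (t N) (x n - x m))
      atTop (nhds 1)) :
    WeylUD x := by
  have key := key_tendsto x t htpos C htC hlim
  intro ℓ hℓ
  set k : ℕ := ℓ.natAbs - 1 with hk
  have hk1 : (k:ℝ) + 1 = (ℓ.natAbs : ℝ) := by
    have h := Nat.succ_pred_eq_of_pos (Int.natAbs_pos.mpr hℓ)
    rw [hk]
    exact_mod_cast congrArg (Nat.cast : ℕ → ℝ) h
  have hnorm : ∀ N : ℕ, ‖∑ n ∈ range N, Complex.exp (2 * (π : ℂ) * Complex.I * (ℓ : ℂ) * (x n : ℂ))‖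
      = ‖∑ n ∈ range N, Complex.exp ((2 * π * ((k : ℝ) + 1) * x n : ℝ) * Complex.I)‖ := by
    intro N
    rcases lt_or_gt_of_ne hℓ with hneg | hpos
    · -- ℓ < 0 : the sum is the conjugate
      have hcast : ((k:ℂ) + 1) = -(ℓ : ℂ) := by
        have : (k:ℝ) + 1 = -(ℓ:ℝ) := by
          rw [hk1]
          rw [Nat.cast_natAbs]
          push_cast
          rw [abs_of_neg (by exact_mod_cast hneg)]
        exact_mod_cast this
      have : ∑ n ∈ range N, Complex.exp (2 * (π : ℂ) * Complex.I * (ℓ : ℂ) * (x n : ℂ))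
          = (starRingEnd ℂ) (∑ n ∈ range N, Complex.exp ((2 * π * ((k : ℝ) + 1) * x n : ℝ) * Complex.I)) := by
        rw [map_sum]
        refine Finset.sum_congr rfl fun n _ => ?_
        rw [← Complex.exp_conj, map_mul, Complex.conj_ofReal, Complex.conj_I]
        congr 1
        push_cast
        rw [show ((k:ℂ) + 1) = -(ℓ : ℂ) from hcast]
        ring
      rw [this, RCLike.norm_conj]
    · -- ℓ > 0
      have hcast : ((k:ℂ) + 1) = (ℓ : ℂ) := by
        have : (k:ℝ) + 1 = (ℓ:ℝ) := by
          rw [hk1, Nat.cast_natAbs]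
          push_cast
          rw [abs_of_pos (by exact_mod_cast hpos)]
        exact_mod_cast this
      congr 1
      refine Finset.sum_congr rfl fun n _ => ?_
      congr 1
      push_cast
      rw [show ((k:ℂ) + 1) = (ℓ : ℂ) from hcast]
      ring
  rw [tendsto_zero_iff_norm_tendsto_zero]
  refine (key k).congr fun N => ?_
  rw [norm_mul, hnorm N]
  rw [norm_div, norm_one, Complex.norm_natCast]
  rw [div_eq_mul_inv, one_div, mul_comm]
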